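/- arXiv:1705.07826 — 4 statements merged into one kernel-verified Lean document; each statement's English description precedes it below -/
import Mathlib

section
/- Let g and ĝ be nonzero complex numbers and ρ a positive real. Then |1 - ρ·(g/ĝ)| < 1 if and only if ρ·Δm < 2·cos(Δp), where Δm = |g/ĝ| and Δp is the argument of g/ĝ. -/
open Complex

lemma Complex.normSq_one_sub_ofReal_mul (ρ : ℝ) (z : ℂ) :
    normSq (1 - ρ * z) = 1 - 2 * ρ * z.re + ρ ^ 2 * ‖z‖ ^ 2 := by
  rw [← normSq_eq_norm_sq, normSq_apply, normSq_apply]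
  simp only [sub_re, sub_im, one_re, one_im, re_ofReal_mul, im_ofReal_mul]
  ring

lemma Complex.norm_one_sub_ofReal_mul_lt_one_iff {ρ : ℝ} (hρ : 0 < ρ) (z : ℂ) :
    ‖1 - ρ * z‖ < 1 ↔ ρ * ‖z‖ ^ 2 < 2 * z.re := by
  rw [← sq_lt_one_iff₀ (norm_nonneg _), ← normSq_eq_norm_sq, normSq_one_sub_ofReal_mul]
  constructor <;> intro h <;> nlinarith

lemma Complex.norm_one_sub_ofReal_mul_lt_one_iff_cos_arg {ρ : ℝ} (hρ : 0 < ρ) {z : ℂ}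
    (hz : z ≠ 0) : ‖1 - ρ * z‖ < 1 ↔ ρ * ‖z‖ < 2 * Real.cos (arg z) := by
  have hnorm : 0 < ‖z‖ := norm_pos_iff.mpr hz
  rw [norm_one_sub_ofReal_mul_lt_one_iff hρ, cos_arg hz, mul_div_assoc', lt_div_iff₀ hnorm,
    mul_assoc, ← sq]

theorem stmt_0 (g gh : ℂ) (hg : g ≠ 0) (hgh : gh ≠ 0) (ρ : ℝ) (hρ : 0 < ρ) :
    ‖1 - (ρ : ℂ) * (g / gh)‖ < 1 ↔
      ρ * ‖g / gh‖ < 2 * Real.cos (Complex.arg (g / gh)) :=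
  norm_one_sub_ofReal_mul_lt_one_iff_cos_arg hρ (div_ne_zero hg hgh)
end

section
/- Fix g ≠ 0, ĝ ≠ 0 in ℂ, yd ∈ ℂ, and ρ ∈ ℝ satisfying 0 < ρ < 2·cos(Δp)/Δm, where g/ĝ = Δm·e^{iΔp}, Δm > 0, and |Δp| < π/2. Then the iteration u_k = u_{k-1} + ρ·ĝ⁻¹·(yd − g·u_{k-1}) with any initial u₁ converges: u_k → yd/g and g·u_k → yd as k → ∞. -/
open Filter Topology

/-!
With `z = g / ĝ` and `d = yd / g`, the error `u k - d` is multiplied by `1 - ρ z` at every step.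
Since `|1 - ρ z|² = 1 - 2ρ Re z + ρ²|z|²` and `Re z = |z| cos (arg z)`, the gain condition
`ρ < 2 cos (arg z) / |z|` says exactly that this factor is a strict contraction, so the error
decays geometrically.
-/

theorem tendsto_of_sub_eq_mul_sub {R : Type*} [SeminormedRing R] {c d : R} {u : ℕ → R} (N : ℕ)
    (hc : ‖c‖ < 1) (h : ∀ k ≥ N, u (k + 1) - d = c * (u k - d)) :
    Tendsto u atTop (𝓝 d) := by
  have herr : ∀ n, u (n + N) = d + c ^ n * (u N - d) := by
    intro n
    induction n with
    | zero => simp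
    | succ n ih =>
      have hstep := h (n + N) (Nat.le_add_left N n)
      rw [Nat.add_right_comm, pow_succ', mul_assoc, eq_sub_of_add_eq' ih.symm, ← hstep]
      abel
  rw [← tendsto_add_atTop_iff_nat N]
  simp only [herr]
  simpa using ((tendsto_pow_atTop_nhds_zero_of_norm_lt_one hc).mul_const (u N - d)).const_add d

namespace Complex

theorem norm_one_sub_ofReal_mul_lt_one {z : ℂ} {ρ : ℝ} (hρ0 : 0 < ρ)
    (hρ : ρ * ‖z‖ ^ 2 < 2 * z.re) : ‖1 - ρ * z‖ < 1 := by
  have hsq : ‖1 - ρ * z‖ ^ 2 = 1 - 2 * ρ * z.re + ρ ^ 2 * ‖z‖ ^ 2 := by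
    rw [Complex.sq_norm, Complex.sq_norm, normSq_apply, normSq_apply]
    simp only [sub_re, sub_im, one_re, one_im, re_ofReal_mul, im_ofReal_mul]
    ring
  have : ‖1 - ρ * z‖ ^ 2 < 1 ^ 2 := by nlinarith
  exact (pow_lt_pow_iff_left₀ (norm_nonneg _) zero_le_one two_ne_zero).mp this

theorem norm_one_sub_ofReal_mul_lt_one_of_lt_cos_arg {z : ℂ} {ρ : ℝ} (hρ0 : 0 < ρ)
    (hρ : ρ < 2 * Real.cos z.arg / ‖z‖) : ‖1 - ρ * z‖ < 1 := by
  have hz : 0 < ‖z‖ := by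
    by_contra! hz
    rw [le_antisymm hz (norm_nonneg z), div_zero] at hρ
    exact hρ0.not_gt hρ
  refine norm_one_sub_ofReal_mul_lt_one hρ0 ?_
  rw [← norm_mul_cos_arg]
  rw [lt_div_iff₀ hz] at hρ
  nlinarith

end Complex

theorem stmt_4_general (g gh : ℂ) (hg : g ≠ 0) (yd : ℂ) (ρ : ℝ)
    (hρ0 : 0 < ρ)
    (hρ : ρ < 2 * Real.cos (Complex.arg (g / gh)) / ‖g / gh‖)
    (u : ℕ → ℂ)
    (hiter : ∀ k, 1 ≤ k → u (k + 1) = u k + (ρ : ℂ) * gh⁻¹ * (yd - g * u k)) :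
    Filter.Tendsto u Filter.atTop (nhds (yd / g)) ∧
      Filter.Tendsto (fun k => g * u k) Filter.atTop (nhds yd) := by
  have hgd : g * (yd / g) = yd := mul_div_cancel₀ yd hg
  have hu : Tendsto u atTop (𝓝 (yd / g)) := by
    refine tendsto_of_sub_eq_mul_sub 1
      (Complex.norm_one_sub_ofReal_mul_lt_one_of_lt_cos_arg hρ0 hρ) fun k hk => ?_
    rw [hiter k hk]
    linear_combination (ρ : ℂ) * gh⁻¹ * hgd.symm
  refine ⟨hu, ?_⟩
  simpa only [hgd] using hu.const_mul g

theorem stmt_4 (g gh : ℂ) (hg : g ≠ 0) (hgh : gh ≠ 0) (yd : ℂ) (ρ : ℝ)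
    (hρ0 : 0 < ρ)
    (hΔp : |Complex.arg (g / gh)| < Real.pi / 2)
    (hρ : ρ < 2 * Real.cos (Complex.arg (g / gh)) / ‖g / gh‖)
    (u : ℕ → ℂ)
    (hiter : ∀ k, 1 ≤ k → u (k + 1) = u k + (ρ : ℂ) * gh⁻¹ * (yd - g * u k)) :
    Filter.Tendsto u Filter.atTop (nhds (yd / g)) ∧
      Filter.Tendsto (fun k => g * u k) Filter.atTop (nhds yd) :=
  stmt_4_general g gh hg yd ρ hρ0 hρ u hiter
end

section
/- Let g, ĝ ∈ ℂ be nonzero, with componentwise uncertainty bounds Δa ≥ |Re(g) − Re(ĝ)| and Δb ≥ |Im(g) − Im(ĝ)|. Let ρ* = 2·(|ĝ|² − (Δa·|Re(ĝ)| + Δb·|Im(ĝ)|)) / |ĝ_abs + Δ|², where ĝ_abs = |Re(ĝ)| + i·|Im(ĝ)| and Δ = Δa + i·Δb. Then for every real ρ with 0 < ρ < ρ*, one has |1 − ρ·(g/ĝ)| < 1. -/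
/-!
Write `ĝ = a + ib`, `g = x + iy`. As `1 - ρ g/ĝ = (ĝ - ρ g)/ĝ`, we need `‖ĝ - ρ g‖ < ‖ĝ‖`, and
since `‖ĝ - ρ g‖² = ‖ĝ‖² - 2ρ⟪ĝ, g⟫ + ρ²‖g‖²` this holds as soon as `ρ ‖g‖² < 2 ⟪ĝ, g⟫`.
The uncertainty bounds give, coordinatewise, `‖g‖² ≤ (|a| + Δa)² + (|b| + Δb)² = ‖ĝ_abs + Δ‖²`
and `⟪ĝ, g⟫ = a x + b y ≥ ‖ĝ‖² - (Δa |a| + Δb |b|)`, so `ρ < ρ*` suffices.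
-/

open scoped InnerProductSpace

lemma sq_le_sq_abs_add_of_abs_sub_le {x a Δ : ℝ} (h : |x - a| ≤ Δ) : x ^ 2 ≤ (|a| + Δ) ^ 2 := by
  have hx : |x| ≤ |a| + Δ := by
    linarith [abs_sub_abs_le_abs_sub x a]
  simpa only [sq_abs] using pow_le_pow_left₀ (abs_nonneg x) hx 2

lemma sq_sub_mul_abs_le_mul_of_abs_sub_le {x a Δ : ℝ} (h : |x - a| ≤ Δ) :
    a ^ 2 - Δ * |a| ≤ a * x := by
  have hdev : |a * (x - a)| ≤ Δ * |a| := by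
    rw [abs_mul, mul_comm Δ]
    exact mul_le_mul_of_nonneg_left h (abs_nonneg a)
  linarith [neg_abs_le (a * (x - a))]

lemma norm_sub_smul_lt_norm {F : Type*} [NormedAddCommGroup F] [InnerProductSpace ℝ F]
    {x y : F} {r : ℝ} (hr : 0 < r) (h : r * ‖y‖ ^ 2 < 2 * ⟪x, y⟫_ℝ) : ‖x - r • y‖ < ‖x‖ := by
  have hsq : ‖x - r • y‖ ^ 2 < ‖x‖ ^ 2 := by
    rw [norm_sub_sq_real, real_inner_smul_right, norm_smul, mul_pow, Real.norm_eq_abs, sq_abs]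
    nlinarith
  exact lt_of_pow_lt_pow_left₀ 2 (norm_nonneg x) hsq

lemma Complex.norm_one_sub_mul_div_lt_one {z w c : ℂ} (h : ‖z - c * w‖ < ‖z‖) :
    ‖1 - c * (w / z)‖ < 1 := by
  have hz : z ≠ 0 := norm_pos_iff.mp ((norm_nonneg _).trans_lt h)
  rwa [← div_self hz, ← mul_div_assoc, ← sub_div, norm_div, div_lt_one (norm_pos_iff.mpr hz)]

theorem stmt_9_general (g gh : ℂ) (Δa Δb : ℝ)
    (ha : |g.re - gh.re| ≤ Δa) (hb : |g.im - gh.im| ≤ Δb)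
    (ρ : ℝ) (hρ0 : 0 < ρ)
    (hρ : ρ < 2 * (‖gh‖ ^ 2 - (Δa * |gh.re| + Δb * |gh.im|)) /
        ‖(((|gh.re| : ℝ) : ℂ) + Complex.I * (|gh.im| : ℝ)) + ((Δa : ℂ) + Complex.I * Δb)‖ ^ 2) :
    ‖1 - (ρ : ℂ) * (g / gh)‖ < 1 := by
  have hden : ‖(((|gh.re| : ℝ) : ℂ) + Complex.I * (|gh.im| : ℝ)) + ((Δa : ℂ) + Complex.I * Δb)‖ ^ 2
      = (|gh.re| + Δa) ^ 2 + (|gh.im| + Δb) ^ 2 := by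
    rw [Complex.sq_norm, Complex.normSq_apply]
    simp only [Complex.add_re, Complex.add_im, Complex.ofReal_re, Complex.ofReal_im,
      Complex.mul_re, Complex.mul_im, Complex.I_re, Complex.I_im]
    ring
  have hgh : ‖gh‖ ^ 2 = gh.re ^ 2 + gh.im ^ 2 := by
    rw [Complex.sq_norm, Complex.normSq_apply]; ring
  have hg_sq : ‖g‖ ^ 2 ≤ (|gh.re| + Δa) ^ 2 + (|gh.im| + Δb) ^ 2 := by
    rw [Complex.sq_norm, Complex.normSq_apply, ← sq, ← sq]
    exact add_le_add (sq_le_sq_abs_add_of_abs_sub_le ha) (sq_le_sq_abs_add_of_abs_sub_le hb)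
  have hinner : ‖gh‖ ^ 2 - (Δa * |gh.re| + Δb * |gh.im|) ≤ ⟪gh, g⟫_ℝ := by
    rw [Complex.inner, hgh]
    simp only [Complex.mul_re, Complex.conj_re, Complex.conj_im]
    linarith [sq_sub_mul_abs_le_mul_of_abs_sub_le ha, sq_sub_mul_abs_le_mul_of_abs_sub_le hb]
  rw [hden] at hρ
  have hden_pos : 0 < (|gh.re| + Δa) ^ 2 + (|gh.im| + Δb) ^ 2 := by
    rcases div_pos_iff.mp (hρ0.trans hρ) with ⟨-, hpos⟩ | ⟨-, hneg⟩
    · exact hpos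
    · exact absurd hneg (not_lt.mpr (by positivity))
  have hstep : ρ * ‖g‖ ^ 2 < 2 * ⟪gh, g⟫_ℝ := by
    rw [lt_div_iff₀ hden_pos] at hρ
    nlinarith
  apply Complex.norm_one_sub_mul_div_lt_one
  simpa only [Complex.real_smul] using norm_sub_smul_lt_norm hρ0 hstep

theorem stmt_9 (g gh : ℂ) (hg : g ≠ 0) (hgh : gh ≠ 0) (Δa Δb : ℝ)
    (ha : |g.re - gh.re| ≤ Δa) (hb : |g.im - gh.im| ≤ Δb)
    (ρ : ℝ) (hρ0 : 0 < ρ)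
    (hρ : ρ < 2 * (‖gh‖ ^ 2 - (Δa * |gh.re| + Δb * |gh.im|)) /
        ‖(((|gh.re| : ℝ) : ℂ) + Complex.I * (|gh.im| : ℝ)) + ((Δa : ℂ) + Complex.I * Δb)‖ ^ 2) :
    ‖1 - (ρ : ℂ) * (g / gh)‖ < 1 :=
  stmt_9_general g gh Δa Δb ha hb ρ hρ0 hρ
end

section
/- Fix g ≠ 0 in ℂ, yd ∈ ℂ, and let (ρ_k) be a sequence of real gains and (ĝ_k) a sequence of nonzero complex models such that for every k, |1 − ρ_k·(g/ĝ_k)| ≤ q for some fixed q < 1. Then the iteration u_k = u_{k-1} + ρ_k·ĝ_k⁻¹·(yd − g·u_{k-1}) satisfies |yd − g·u_k| ≤ q^{k-1}·|yd − g·u₁|, and hence g·u_k → yd. -/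
/-!
Writing `e k = yd - g * u k` for the tracking error, one step of the iteration multiplies the
error by `1 - ρ k * (g / gh k)`, whose modulus is at most `q`. Hence the error decays at least
geometrically with ratio `q`, and `q < 1` forces it to zero.
-/

open Filter Topology

theorem sub_mul_learning_step {K : Type*} [Field K] (g h r yd u : K) :
    yd - g * (u + r * h⁻¹ * (yd - g * u)) = (1 - r * (g / h)) * (yd - g * u) := by
  ring

theorem le_pow_pred_mul_of_succ_le_mul {a : ℕ → ℝ} {q : ℝ} (hq : 0 ≤ q)
    (hstep : ∀ k, 1 ≤ k → a (k + 1) ≤ q * a k) (k : ℕ) (hk : 1 ≤ k) :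
    a k ≤ q ^ (k - 1) * a 1 := by
  obtain ⟨n, rfl⟩ := Nat.exists_eq_add_of_le' hk
  simpa [add_comm] using
    le_geom (u := fun j => a (j + 1)) hq n fun j _ => hstep (j + 1) (Nat.le_add_left 1 j)

theorem tendsto_zero_of_norm_le_pow_pred_mul {E : Type*} [SeminormedAddCommGroup E]
    {e : ℕ → E} {q C : ℝ} (hq₀ : 0 ≤ q) (hq₁ : q < 1)
    (hbound : ∀ k, 1 ≤ k → ‖e k‖ ≤ q ^ (k - 1) * C) :
    Tendsto e atTop (𝓝 0) := by
  have hgeom : Tendsto (fun k : ℕ => q ^ (k - 1) * C) atTop (𝓝 0) := by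
    simpa using ((tendsto_pow_atTop_nhds_zero_of_lt_one hq₀ hq₁).comp
      (tendsto_sub_atTop_nat 1)).mul_const C
  exact squeeze_zero_norm' (eventually_atTop.2 ⟨1, hbound⟩) hgeom

theorem stmt_16_general (g : ℂ) (yd : ℂ) (ρ : ℕ → ℝ) (gh : ℕ → ℂ)
    (q : ℝ) (hq : q < 1)
    (hcontract : ∀ k, ‖1 - (ρ k : ℂ) * (g / gh k)‖ ≤ q)
    (u : ℕ → ℂ)
    (hiter : ∀ k, 1 ≤ k → u (k + 1) = u k + (ρ k : ℂ) * (gh k)⁻¹ * (yd - g * u k)) :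
    (∀ k, 1 ≤ k →
        ‖yd - g * u k‖ ≤ q ^ (k - 1) * ‖yd - g * u 1‖) ∧
      Filter.Tendsto (fun k => g * u k) Filter.atTop (nhds yd) := by
  have hq₀ : 0 ≤ q := (norm_nonneg _).trans (hcontract 0)
  have hstep : ∀ k, 1 ≤ k → ‖yd - g * u (k + 1)‖ ≤ q * ‖yd - g * u k‖ := fun k hk => by
    rw [hiter k hk, sub_mul_learning_step, norm_mul]
    exact mul_le_mul_of_nonneg_right (hcontract k) (norm_nonneg _)
  have hbound := le_pow_pred_mul_of_succ_le_mul (a := fun k => ‖yd - g * u k‖) hq₀ hstep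
  refine ⟨hbound, ?_⟩
  have herr : Tendsto (fun k => yd - g * u k) atTop (𝓝 0) :=
    tendsto_zero_of_norm_le_pow_pred_mul hq₀ hq hbound
  simpa using (tendsto_const_nhds (x := yd)).sub herr

theorem stmt_16 (g : ℂ) (hg : g ≠ 0) (yd : ℂ) (ρ : ℕ → ℝ) (gh : ℕ → ℂ)
    (hgh : ∀ k, gh k ≠ 0) (q : ℝ) (hq : q < 1)
    (hcontract : ∀ k, ‖1 - (ρ k : ℂ) * (g / gh k)‖ ≤ q)
    (u : ℕ → ℂ)
    (hiter : ∀ k, 1 ≤ k → u (k + 1) = u k + (ρ k : ℂ) * (gh k)⁻¹ * (yd - g * u k)) :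
    (∀ k, 1 ≤ k →
        ‖yd - g * u k‖ ≤ q ^ (k - 1) * ‖yd - g * u 1‖) ∧
      Filter.Tendsto (fun k => g * u k) Filter.atTop (nhds yd) :=
  stmt_16_general g yd ρ gh q hq hcontract u hiter
end
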